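/- If the Thue–Morse word admits a factorization t = u·μ^{n+1}(x)·v, where u is a finite word, x ∈ {a,b} is a letter, and n ≥ 0, then u = μⁿ(w) for some finite word w and v = μⁿ(z) for some infinite word z. -/
import Mathlib


/-- Alphabet: `false` = a, `true` = b. The Thue–Morse morphism μ(a)=ab, μ(b)=ba. -/
def mu (w : List Bool) : List Bool := w.flatMap (fun x => [x, !x])

/-- The Thue–Morse word: `tm n` is the parity of the binary digit sum of `n`. -/
def tm (n : ℕ) : Bool := (Nat.digits 2 n).sum % 2 == 1

/-- `w` is a (finite) factor/segment of the Thue–Morse word. -/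
def IsFactorTM (w : List Bool) : Prop :=
  ∃ i : ℕ, w = (List.range w.length).map (fun k => tm (i + k))

/-- Apply the endomorphism of {a,b}⁺ determined by a ↦ fa, b ↦ fb to a word. -/
def subst (fa fb : List Bool) (w : List Bool) : List Bool :=
  w.flatMap (fun x => if x then fb else fa)

/-- Concatenation of a finite word with an infinite word. -/
def catWord (u : List Bool) (f : ℕ → Bool) : ℕ → Bool :=
  fun k => if h : k < u.length then u.get ⟨k, h⟩ else f (k - u.length)

/-- μ applied to an infinite word. -/
def muInf (f : ℕ → Bool) : ℕ → Bool :=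
  fun k => if k % 2 = 0 then f (k / 2) else !(f (k / 2))

lemma tm_zero : tm 0 = false := by simp [tm]
lemma tm_one : tm 1 = true := by norm_num [tm]
lemma tm_two : tm 2 = true := by norm_num [tm]

lemma tm_two_mul (n : ℕ) : tm (2*n) = tm n := by
  rcases Nat.eq_zero_or_pos n with h | h
  · simp [h]
  · unfold tm
    rw [Nat.digits_def' (by norm_num) (by omega)]
    simp [Nat.mul_div_cancel_left _ (by norm_num : (0:ℕ) < 2)]

lemma tm_two_mul_add_one (n : ℕ) : tm (2*n+1) = !tm n := by
  unfold tm
  rw [Nat.digits_def' (by norm_num) (by omega)]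
  have h1 : (2*n+1) % 2 = 1 := by omega
  have h2 : (2*n+1) / 2 = n := by omega
  rw [h1, h2]
  rcases Nat.even_or_odd (Nat.digits 2 n).sum with he | ho
  · rw [Nat.even_iff] at he; simp [List.sum_cons, Nat.add_mod, he]
  · rw [Nat.odd_iff] at ho; simp [List.sum_cons, Nat.add_mod, ho]

lemma tm_mul_pow (m n : ℕ) : tm (m * 2^n) = tm m := by
  induction n with
  | zero => simp
  | succ n ih =>
    have : m * 2^(n+1) = 2 * (m * 2^n) := by ring
    rw [this, tm_two_mul, ih]

lemma mu_map_range (f : ℕ → Bool) (h1 : ∀ j, f (2*j) = f j) (h2 : ∀ j, f (2*j+1) = !(f j))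
    (m : ℕ) : mu ((List.range m).map f) = (List.range (2*m)).map f := by
  induction m with
  | zero => rfl
  | succ m ih =>
    rw [List.range_succ, List.map_append, show 2*(m+1) = (2*m+1)+1 by ring,
      List.range_succ, List.range_succ, List.map_append, List.map_append]
    have hmu : ∀ a b : List Bool, mu (a ++ b) = mu a ++ mu b := by
      intro a b; simp [mu]
    rw [hmu, ih]
    simp [mu, h1, h2]

lemma mu_pow_map (f : ℕ → Bool) (h1 : ∀ j, f (2*j) = f j) (h2 : ∀ j, f (2*j+1) = !(f j))
    (n m : ℕ) : mu^[n] ((List.range m).map f) = (List.range (2^n * m)).map f := by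
  induction n generalizing m with
  | zero => simp
  | succ n ih =>
    rw [Function.iterate_succ_apply, mu_map_range f h1 h2, ih]
    congr 2
    ring

lemma mu_pow_tm (n m : ℕ) : mu^[n] ((List.range m).map tm) = (List.range (2^n * m)).map tm :=
  mu_pow_map tm tm_two_mul tm_two_mul_add_one n m

lemma mu_pow_single (x : Bool) (n : ℕ) :
    mu^[n] [x] = (List.range (2^n)).map (fun k => xor x (tm k)) := by
  have h0 : [x] = (List.range 1).map (fun k => xor x (tm k)) := by
    show [x] = [xor x (tm 0)]
    rw [tm_zero]
    cases x <;> rfl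
  rw [h0, mu_pow_map _ (fun j => by rw [tm_two_mul]) (fun j => by rw [tm_two_mul_add_one]; cases x <;> simp)]
  rw [mul_one]

lemma mu_pow_single_length (x : Bool) (n : ℕ) : (mu^[n] [x]).length = 2^n := by
  rw [mu_pow_single]; simp

lemma muInf_tail (m : ℕ) : muInf (fun k => tm (m + k)) = fun k => tm (2*m + k) := by
  funext k
  rcases Nat.even_or_odd k with ⟨j, hj⟩ | ⟨j, hj⟩
  · have hk : k = 2*j := by omega
    subst hk
    simp [muInf, Nat.mul_div_cancel_left, show 2*m + 2*j = 2*(m+j) by ring, tm_two_mul,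
      show (2*j) % 2 = 0 by omega, show (2*j)/2 = j by omega]
  · subst hj
    simp [muInf, show (2*j+1) % 2 = 1 by omega, show (2*j+1)/2 = j by omega,
      show 2*m + (2*j+1) = 2*(m+j)+1 by ring, tm_two_mul_add_one]

lemma muInf_pow_tail (n m : ℕ) :
    muInf^[n] (fun k => tm (m + k)) = fun k => tm (2^n * m + k) := by
  induction n generalizing m with
  | zero => simp
  | succ n ih =>
    rw [Function.iterate_succ_apply, muInf_tail, ih]
    funext k
    congr 2
    ring

lemma sync_core (x : Bool) (n : ℕ) : ∀ p : ℕ, (∀ k < 2^(n+1), tm (p + k) = xor x (tm k)) →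
    2^n ∣ p := by
  induction n with
  | zero => intro p _; exact one_dvd p
  | succ n ih =>
    intro p hocc
    obtain ⟨q, hq⟩ := ih p (fun k hk => hocc k (by
      have : (2:ℕ)^(n+1) < 2^(n+2) := by
        exact Nat.pow_lt_pow_right (by norm_num) (by omega)
      omega))
    have hlt1 : (2:ℕ)^n < 2^(n+2) := Nat.pow_lt_pow_right (by norm_num) (by omega)
    have hlt2 : 2 * (2:ℕ)^n < 2^(n+2) := by
      have : 2 * (2:ℕ)^n = 2^(n+1) := by ring
      rw [this]; exact Nat.pow_lt_pow_right (by norm_num) (by omega)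
    have h1 : tm (q+1) = !x := by
      have := hocc (2^n) hlt1
      rw [hq, show 2^n * q + 2^n = (q+1) * 2^n by ring, tm_mul_pow,
        show (2:ℕ)^n = 1 * 2^n by ring, tm_mul_pow, tm_one] at this
      rw [this]; cases x <;> rfl
    have h2 : tm (q+2) = !x := by
      have := hocc (2 * 2^n) hlt2
      rw [hq, show 2^n * q + 2 * 2^n = (q+2) * 2^n by ring, tm_mul_pow,
        tm_mul_pow, tm_two] at this
      rw [this]; cases x <;> rfl
    rcases Nat.even_or_odd q with ⟨s, hs⟩ | ⟨s, hs⟩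
    · refine ⟨s, ?_⟩
      rw [hq, show q = 2*s by omega]
      ring
    · exfalso
      rw [show q + 1 = 2*(s+1) by omega, tm_two_mul] at h1
      rw [show q + 2 = 2*(s+1)+1 by omega, tm_two_mul_add_one, h1] at h2
      cases x <;> simp_all

/-- If t = u·μ^{n+1}(x)·v then u ∈ Im μⁿ and v ∈ Im μⁿ. -/
theorem sync_factorization (u : List Bool) (x : Bool) (n : ℕ) (v : ℕ → Bool)
    (h : tm = catWord u (catWord (mu^[n + 1] [x]) v)) :
    (∃ w : List Bool, u = mu^[n] w) ∧ (∃ z : ℕ → Bool, v = muInf^[n] z) := by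
  set M := mu^[n+1] [x] with hM
  have hMlen : M.length = 2^(n+1) := mu_pow_single_length x (n+1)
  have hMget : ∀ (k : ℕ) (hk : k < M.length), M.get ⟨k, hk⟩ = xor x (tm k) := by
    intro k hk
    have hk' : k < 2^(n+1) := by omega
    simp only [List.get_eq_getElem, hM, mu_pow_single]
    simp [hk']
  -- middle occurrence
  have hmid : ∀ k < 2^(n+1), tm (u.length + k) = xor x (tm k) := by
    intro k hk
    have := congrFun h (u.length + k)
    rw [catWord] at this
    rw [dif_neg (by omega)] at this
    have hsub : u.length + k - u.length = k := by omega
    rw [hsub, catWord, dif_pos (by rw [hMlen]; exact hk)] at this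
    rw [this, hMget]
  obtain ⟨m, hm⟩ := sync_core x n u.length hmid
  constructor
  · refine ⟨(List.range m).map tm, ?_⟩
    rw [mu_pow_tm]
    apply List.ext_get
    · simp [hm]
    · intro k hk1 hk2
      have hku : k < u.length := by simpa using hk1
      have := congrFun h k
      rw [catWord, dif_pos hku] at this
      simpa using this.symm
  · refine ⟨fun k => tm ((m + 2) + k), ?_⟩
    rw [muInf_pow_tail]
    funext k
    have := congrFun h (u.length + 2^(n+1) + k)
    rw [catWord, dif_neg (by omega)] at this
    have hsub : u.length + 2^(n+1) + k - u.length = 2^(n+1) + k := by omega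
    rw [hsub, catWord, dif_neg (by rw [hMlen]; omega)] at this
    rw [hMlen] at this
    have hsub2 : 2^(n+1) + k - 2^(n+1) = k := by omega
    rw [hsub2] at this
    rw [← this]
    congr 1
    rw [hm]
    ring
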